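/- Fix n ≥ 1 and work in ℝⁿ with Lebesgue measure; |x| denotes the Euclidean norm. Let K : ℝⁿ → [0,∞) be a measurable kernel with K(−x) = K(x) for all x ∈ ℝⁿ and ∫_{ℝⁿ} min{1,|x|} K(x) dx < ∞. Let ν ∈ ℝⁿ∖{0}, let H := H_ν be the corresponding halfspace, and let B := B(0,1) be the open unit ball. Then P_K(H;B) < ∞, and P_K(H;B) ≤ J_K(v;B) for every measurable function v : ℝⁿ → [0,1] such that v = χ_H almost everywhere on ℝⁿ∖B. -/

import Mathlib

open MeasureTheory Set Filter Metric
open scoped ENNReal Topology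

/-- The nonlocal energy `J_K(u;Ω)` in `ℝⁿ`. -/
noncomputable def nonlocalJ {n : ℕ} (K : EuclideanSpace ℝ (Fin n) → ℝ)
    (Ω : Set (EuclideanSpace ℝ (Fin n))) (u : EuclideanSpace ℝ (Fin n) → ℝ) : ℝ≥0∞ :=
  (1/2) * (∫⁻ x in Ω, ∫⁻ y in Ω,
      ENNReal.ofReal (K (x - y)) * ENNReal.ofReal |u y - u x|)
    + ∫⁻ x in Ω, ∫⁻ y in Ωᶜ,
        ENNReal.ofReal (K (x - y)) * ENNReal.ofReal |u y - u x|

/-- The halfspace with inner normal `ν`. -/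
def halfspace {n : ℕ} (ν : EuclideanSpace ℝ (Fin n)) : Set (EuclideanSpace ℝ (Fin n)) :=
  {x | 0 ≤ (inner ℝ x ν : ℝ)}


/-!
The halfspace `H` is calibrated by `σ(x, y) = sign ⟪y - x, ν⟫`:
`|χ_H y - χ_H x| = σ(x, y) (χ_H y - χ_H x)` and `|σ| ≤ 1`, while `∫ K(x - y) σ(x, y) dy = 0` for
every `x` because `K` is even. For an integrable kernel the energy of a competitor `v` therefore
dominates `∫ K σ (v y - v x)`, and this linear functional agrees on `v` and `χ_H`: the difference
`w = v - χ_H` vanishes off the ball, so by the antisymmetry of `K σ` it reduces to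
`-∫_{B × ℝⁿ} K(x - y) σ(x, y) w(x)`, which is zero. A general kernel is the increasing limit of the
integrable kernels `K · 1_{|z| > 1/(j+1)}`.

Finiteness: `χ_H (x + z) ≠ χ_H x` confines `x` to a slab of width `|z|` around `∂H`, which meets
the unit ball in volume at most `2ⁿ min(1, |z|)`.
-/

open scoped InnerProductSpace

namespace Real

lemma abs_sign_le_one (r : ℝ) : |sign r| ≤ 1 := by
  rcases sign_apply_eq r with h | h | h <;> simp [h]

lemma abs_sign_mul_le {r a c : ℝ} (h : |a| ≤ c) : |sign r * a| ≤ c :=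
  (abs_mul _ _).trans_le ((mul_le_of_le_one_left (abs_nonneg _) (abs_sign_le_one r)).trans h)

@[fun_prop]
lemma measurable_sign : Measurable sign :=
  Measurable.ite measurableSet_Iio measurable_const
    (Measurable.ite measurableSet_Ioi measurable_const measurable_const)

end Real

lemma integral_mul_sign_inner_sub_eq_zero {E : Type*} [NormedAddCommGroup E]
    [InnerProductSpace ℝ E] [MeasurableSpace E] [BorelSpace E] {μ : Measure E}
    [μ.IsAddLeftInvariant] [μ.IsNegInvariant] {K : E → ℝ} (hK : ∀ z, K (-z) = K z)
    (ν x : E) : ∫ y, K (x - y) * Real.sign ⟪y - x, ν⟫_ℝ ∂μ = 0 := by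
  have hodd : ∫ z, K z * Real.sign ⟪z, ν⟫_ℝ ∂μ = -∫ z, K z * Real.sign ⟪z, ν⟫_ℝ ∂μ := by
    conv_lhs => rw [← integral_neg_eq_self]
    simp only [hK, inner_neg_left, Real.sign_neg, mul_neg, integral_neg]
  calc ∫ y, K (x - y) * Real.sign ⟪y - x, ν⟫_ℝ ∂μ
      = ∫ z, K z * Real.sign ⟪z, ν⟫_ℝ ∂μ := by
        rw [← integral_add_left_eq_self _ x]
        simp only [sub_add_cancel_left, hK, add_sub_cancel_left]
    _ = 0 := by linarith

section Halfspace

variable {n : ℕ} (ν : EuclideanSpace ℝ (Fin n))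

lemma measurableSet_halfspace : MeasurableSet (halfspace ν) :=
  (isClosed_le continuous_const (continuous_id.inner continuous_const)).measurableSet

lemma measurable_indicator_halfspace :
    Measurable ((halfspace ν).indicator (1 : EuclideanSpace ℝ (Fin n) → ℝ)) :=
  measurable_const.indicator (measurableSet_halfspace ν)

lemma indicator_halfspace_mem_Icc (x : EuclideanSpace ℝ (Fin n)) :
    (halfspace ν).indicator (1 : EuclideanSpace ℝ (Fin n) → ℝ) x ∈ Icc 0 1 := by
  by_cases hx : x ∈ halfspace ν <;> simp [hx]

lemma abs_indicator_halfspace_sub (x y : EuclideanSpace ℝ (Fin n)) :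
    |(halfspace ν).indicator 1 y - (halfspace ν).indicator 1 x|
      = Real.sign ⟪y - x, ν⟫_ℝ
          * ((halfspace ν).indicator 1 y - (halfspace ν).indicator 1 x) := by
  simp only [halfspace, indicator_apply, mem_ofPred_eq, Pi.one_apply, inner_sub_left]
  split_ifs with hy hx hx
  · simp
  · rw [Real.sign_of_pos (by linarith)]; norm_num
  · rw [Real.sign_of_neg (by linarith)]; norm_num
  · simp

lemma abs_inner_le_of_indicator_halfspace_ne {x z : EuclideanSpace ℝ (Fin n)}
    (h : (halfspace ν).indicator (1 : EuclideanSpace ℝ (Fin n) → ℝ) (x + z)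
      ≠ (halfspace ν).indicator 1 x) :
    |⟪x, ν⟫_ℝ| ≤ |⟪z, ν⟫_ℝ| := by
  simp only [halfspace, indicator_apply, mem_ofPred_eq, Pi.one_apply, inner_add_left] at h
  rw [abs_le]
  split_ifs at h <;> first
    | exact absurd rfl h
    | constructor <;> linarith [le_abs_self ⟪z, ν⟫_ℝ, neg_abs_le ⟪z, ν⟫_ℝ]

end Halfspace

lemma volume_abs_inner_le_inter_ball_le {ι : Type*} [Fintype ι]
    {e : EuclideanSpace ℝ ι} (he : ‖e‖ = 1) {t : ℝ} (ht : 0 ≤ t) :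
    volume ({x | |⟪x, e⟫_ℝ| ≤ t} ∩ ball 0 1)
      ≤ ENNReal.ofReal (2 ^ Fintype.card ι * t) := by
  classical
  obtain ⟨i₀⟩ : Nonempty ι := by
    by_contra! h
    simp [Subsingleton.elim e 0] at he
  have he' : Orthonormal ℝ (({i₀} : Set ι).domRestrict fun _ => e) :=
    ⟨fun _ => he, fun i j hij => absurd (Subsingleton.elim i j) hij⟩
  obtain ⟨b, hb⟩ := he'.exists_orthonormalBasis_extension_of_card_eq (by simp)
  set r : ι → ℝ := Function.update 1 i₀ t
  have hsub : {x | |⟪x, e⟫_ℝ| ≤ t} ∩ ball 0 1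
      ⊆ (fun x => WithLp.ofLp (b.repr x)) ⁻¹' Icc (-r) r := by
    rintro x ⟨hxe, hx⟩
    have hcoord : ∀ i, |b.repr x i| ≤ r i := by
      intro i
      rw [b.repr_apply_apply]
      rcases eq_or_ne i i₀ with rfl | hi
      · simpa [r, hb i rfl, real_inner_comm] using hxe
      · simp only [r, Function.update_of_ne hi, Pi.one_apply]
        calc |⟪b i, x⟫_ℝ| ≤ ‖b i‖ * ‖x‖ := abs_real_inner_le_norm _ _
          _ ≤ 1 := by rw [b.orthonormal.1 i, one_mul]; exact (mem_ball_zero_iff.mp hx).le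
    exact ⟨fun i => (abs_le.mp (hcoord i)).1, fun i => (abs_le.mp (hcoord i)).2⟩
  calc volume ({x | |⟪x, e⟫_ℝ| ≤ t} ∩ ball 0 1)
      ≤ volume ((fun x => WithLp.ofLp (b.repr x)) ⁻¹' Icc (-r) r) := measure_mono hsub
    _ = volume (Icc (-r) r) :=
        ((PiLp.volume_preserving_ofLp ι).comp b.measurePreserving_repr).measure_preimage
          measurableSet_Icc.nullMeasurableSet
    _ = ENNReal.ofReal (2 ^ Fintype.card ι * t) := by
        have hr : ∀ i, 0 ≤ r i := by
          intro i
          rcases eq_or_ne i i₀ with rfl | hi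
          · simpa [r] using ht
          · simp [r, Function.update_of_ne hi]
        simp_rw [Real.volume_Icc_pi, Pi.neg_apply, sub_neg_eq_add, ← two_mul]
        rw [← ENNReal.ofReal_prod_of_nonneg fun i _ => mul_nonneg zero_le_two (hr i),
          Finset.prod_mul_distrib, Finset.prod_const, Finset.card_univ,
          Finset.prod_update_of_mem (Finset.mem_univ i₀)]
        simp

section Energy

variable {n : ℕ} {K : EuclideanSpace ℝ (Fin n) → ℝ}

lemma lintegral_ball_abs_indicator_halfspace_sub_le {ν : EuclideanSpace ℝ (Fin n)}
    (hν : ν ≠ 0) (z : EuclideanSpace ℝ (Fin n)) :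
    ∫⁻ x in ball 0 1, ENNReal.ofReal
        |(halfspace ν).indicator (1 : EuclideanSpace ℝ (Fin n) → ℝ) (x + z)
          - (halfspace ν).indicator 1 x|
      ≤ ENNReal.ofReal (2 ^ n * min 1 ‖z‖) := by
  set u := (halfspace ν).indicator (1 : EuclideanSpace ℝ (Fin n) → ℝ)
  set e := ‖ν‖⁻¹ • ν
  have he : ‖e‖ = 1 := by
    rw [norm_smul, norm_inv, norm_norm, inv_mul_cancel₀ (norm_ne_zero_iff.mpr hν)]
  set S := {x : EuclideanSpace ℝ (Fin n) | |⟪x, e⟫_ℝ| ≤ min 1 ‖z‖}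
  have hS : MeasurableSet S :=
    (isClosed_le (continuous_id.inner continuous_const).abs continuous_const).measurableSet
  have hmem : ∀ x ∈ ball (0 : EuclideanSpace ℝ (Fin n)) 1, u (x + z) ≠ u x → x ∈ S := by
    intro x hx hxz
    show |⟪x, e⟫_ℝ| ≤ min 1 ‖z‖
    refine le_min ?_ ?_
    · calc |⟪x, e⟫_ℝ| ≤ ‖x‖ * ‖e‖ := abs_real_inner_le_norm _ _
        _ ≤ 1 := by
          rw [he, mul_one]
          exact (mem_ball_zero_iff.mp hx).le
    · rw [real_inner_smul_right, abs_mul, abs_inv, abs_norm]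
      calc ‖ν‖⁻¹ * |⟪x, ν⟫_ℝ| ≤ ‖ν‖⁻¹ * (‖z‖ * ‖ν‖) := by
            gcongr
            exact (abs_inner_le_of_indicator_halfspace_ne ν hxz).trans
              (abs_real_inner_le_norm _ _)
        _ = ‖z‖ := by field_simp [norm_ne_zero_iff.mpr hν]
  calc ∫⁻ x in ball 0 1, ENNReal.ofReal |u (x + z) - u x|
      ≤ ∫⁻ x in ball 0 1, S.indicator 1 x := by
        refine setLIntegral_mono (measurable_const.indicator hS) fun x hx => ?_
        by_cases hxz : u (x + z) = u x
        · simp [hxz]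
        · obtain ⟨h₁, h₂⟩ := indicator_halfspace_mem_Icc ν (x + z)
          obtain ⟨h₃, h₄⟩ := indicator_halfspace_mem_Icc ν x
          rw [indicator_of_mem (hmem x hx hxz), Pi.one_apply, ENNReal.ofReal_le_one]
          exact abs_sub_le_of_nonneg_of_le h₁ h₂ h₃ h₄
    _ = volume (S ∩ ball 0 1) := by rw [lintegral_indicator_one hS, Measure.restrict_apply hS]
    _ ≤ ENNReal.ofReal (2 ^ n * min 1 ‖z‖) := by
        simpa only [Fintype.card_fin] using volume_abs_inner_le_inter_ball_le
          he (le_min zero_le_one (norm_nonneg z))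

lemma nonlocalJ_le_two_mul (Ω : Set (EuclideanSpace ℝ (Fin n)))
    (u : EuclideanSpace ℝ (Fin n) → ℝ) :
    nonlocalJ K Ω u
      ≤ 2 * ∫⁻ x in Ω, ∫⁻ y,
          ENNReal.ofReal (K (x - y)) * ENNReal.ofReal |u y - u x| := by
  have h (s : Set (EuclideanSpace ℝ (Fin n))) :
      ∫⁻ x in Ω, ∫⁻ y in s, ENNReal.ofReal (K (x - y)) * ENNReal.ofReal |u y - u x|
        ≤ ∫⁻ x in Ω, ∫⁻ y, ENNReal.ofReal (K (x - y)) * ENNReal.ofReal |u y - u x| :=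
    lintegral_mono fun x => setLIntegral_le_lintegral _ _
  rw [two_mul]
  exact add_le_add ((mul_le_of_le_one_left' (by norm_num)).trans (h Ω)) (h Ωᶜ)

theorem nonlocalJ_indicator_halfspace_ball_lt_top (hKmeas : Measurable K)
    (hKsymm : ∀ z, K (-z) = K z)
    (hKint : ∫⁻ z, ENNReal.ofReal (min 1 ‖z‖ * K z) < ⊤)
    {ν : EuclideanSpace ℝ (Fin n)} (hν : ν ≠ 0) :
    nonlocalJ K (ball 0 1) ((halfspace ν).indicator 1) < ⊤ := by
  set u := (halfspace ν).indicator (1 : EuclideanSpace ℝ (Fin n) → ℝ)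
  have hu : Measurable u := measurable_indicator_halfspace ν
  have htranslate (x : EuclideanSpace ℝ (Fin n)) :
      ∫⁻ y, ENNReal.ofReal (K (x - y)) * ENNReal.ofReal |u y - u x|
        = ∫⁻ z, ENNReal.ofReal (K z) * ENNReal.ofReal |u (x + z) - u x| := by
    rw [← lintegral_add_left_eq_self
      (fun y => ENNReal.ofReal (K (x - y)) * ENNReal.ofReal |u y - u x|) x]
    simp only [sub_add_cancel_left, hKsymm]
  calc nonlocalJ K (ball 0 1) u
      ≤ 2 * ∫⁻ x in ball 0 1, ∫⁻ y,
          ENNReal.ofReal (K (x - y)) * ENNReal.ofReal |u y - u x| :=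
        nonlocalJ_le_two_mul _ _
    _ = 2 * ∫⁻ z, ENNReal.ofReal (K z) *
          ∫⁻ x in ball 0 1, ENNReal.ofReal |u (x + z) - u x| := by
        rw [lintegral_congr htranslate, lintegral_lintegral_swap (by fun_prop)]
        congr 1
        exact lintegral_congr fun z => lintegral_const_mul _ (by fun_prop)
    _ ≤ 2 * ∫⁻ z, ENNReal.ofReal (2 ^ n) * ENNReal.ofReal (min 1 ‖z‖ * K z) := by
        gcongr 2 * ∫⁻ z, ?_ with z
        calc ENNReal.ofReal (K z) * ∫⁻ x in ball 0 1, ENNReal.ofReal |u (x + z) - u x|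
            ≤ ENNReal.ofReal (K z) * ENNReal.ofReal (2 ^ n * min 1 ‖z‖) := by
              gcongr
              exact lintegral_ball_abs_indicator_halfspace_sub_le hν z
          _ = ENNReal.ofReal (2 ^ n) * ENNReal.ofReal (min 1 ‖z‖ * K z) := by
              rw [ENNReal.ofReal_mul (by positivity),
                ENNReal.ofReal_mul (le_min zero_le_one (norm_nonneg z))]
              ring
    _ < ⊤ := by
        rw [lintegral_const_mul _ (by fun_prop)]
        exact ENNReal.mul_lt_top (by simp) (ENNReal.mul_lt_top ENNReal.ofReal_lt_top hKint)

end Energy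

noncomputable def interactionMeasure {α : Type*} [MeasureSpace α] (Ω : Set α) :
    Measure (α × α) :=
  (1 / 2 : ℝ≥0∞) • volume.restrict (Ω ×ˢ Ω) + volume.restrict (Ω ×ˢ Ωᶜ)

lemma integral_interactionMeasure {α : Type*} [MeasureSpace α] {Ω : Set α}
    {f : α × α → ℝ} (hf : Integrable f (interactionMeasure Ω)) :
    ∫ p, f p ∂interactionMeasure Ω
      = 1 / 2 * (∫ p in Ω ×ˢ Ω, f p) + ∫ p in Ω ×ˢ Ωᶜ, f p := by
  rw [interactionMeasure, integral_add_measure hf.left_of_add_measure hf.right_of_add_measure,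
    integral_smul_measure]
  norm_num

section Interaction

variable {n : ℕ} {K : EuclideanSpace ℝ (Fin n) → ℝ} {Ω : Set (EuclideanSpace ℝ (Fin n))}

lemma nonlocalJ_eq_lintegral (hK : Measurable K) {u : EuclideanSpace ℝ (Fin n) → ℝ}
    (hu : Measurable u) :
    nonlocalJ K Ω u = ∫⁻ p, ENNReal.ofReal (K (p.1 - p.2)) * ENNReal.ofReal |u p.2 - u p.1|
      ∂interactionMeasure Ω := by
  have hmeas : Measurable fun p : EuclideanSpace ℝ (Fin n) × EuclideanSpace ℝ (Fin n) =>
      ENNReal.ofReal (K (p.1 - p.2)) * ENNReal.ofReal |u p.2 - u p.1| := by fun_prop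
  rw [interactionMeasure, lintegral_add_measure, lintegral_smul_measure, Measure.volume_eq_prod,
    setLIntegral_prod _ hmeas.aemeasurable, setLIntegral_prod _ hmeas.aemeasurable]
  rfl

lemma nonlocalJ_eq_ofReal_integral (hK : Measurable K) (hK0 : ∀ z, 0 ≤ K z)
    {u : EuclideanSpace ℝ (Fin n) → ℝ} (hu : Measurable u)
    (hint : Integrable (fun p => K (p.1 - p.2) * |u p.2 - u p.1|) (interactionMeasure Ω)) :
    nonlocalJ K Ω u
      = ENNReal.ofReal (∫ p, K (p.1 - p.2) * |u p.2 - u p.1| ∂interactionMeasure Ω) := by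
  rw [nonlocalJ_eq_lintegral hK hu, ofReal_integral_eq_lintegral_ofReal hint
    (ae_of_all _ fun p => mul_nonneg (hK0 _) (abs_nonneg _))]
  simp_rw [ENNReal.ofReal_mul (hK0 _)]

lemma integrableOn_kernel_mul (hKmeas : Measurable K) (hK : Integrable K) (hΩ : volume Ω ≠ ∞)
    {φ : EuclideanSpace ℝ (Fin n) × EuclideanSpace ℝ (Fin n) → ℝ} (hφ : Measurable φ)
    {C : ℝ} (hC : ∀ p, |φ p| ≤ C) :
    IntegrableOn (fun p => K (p.1 - p.2) * φ p) (Ω ×ˢ univ) := by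
  have : IsFiniteMeasure (volume.restrict Ω) := isFiniteMeasure_restrict.mpr hΩ
  have hKd : Integrable (fun p : EuclideanSpace ℝ (Fin n) × EuclideanSpace ℝ (Fin n) =>
      K (p.1 - p.2)) ((volume.restrict Ω).prod volume) := by
    refine (integrable_prod_iff ?_).mpr ⟨ae_of_all _ fun x => hK.comp_sub_left x, ?_⟩
    · exact (hKmeas.comp measurable_sub).aestronglyMeasurable
    · exact (integrable_const (∫ z, ‖K z‖)).congr (ae_of_all _ fun x =>
        (integral_sub_left_eq_self (fun z => ‖K z‖) volume x).symm)
  rw [IntegrableOn, Measure.volume_eq_prod, ← Measure.prod_restrict, Measure.restrict_univ]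
  exact hKd.mul_bdd hφ.aestronglyMeasurable (ae_of_all _ hC)

lemma integrable_kernel_mul_interactionMeasure (hKmeas : Measurable K) (hK : Integrable K)
    (hΩ : volume Ω ≠ ∞)
    {φ : EuclideanSpace ℝ (Fin n) × EuclideanSpace ℝ (Fin n) → ℝ} (hφ : Measurable φ)
    {C : ℝ} (hC : ∀ p, |φ p| ≤ C) :
    Integrable (fun p => K (p.1 - p.2) * φ p) (interactionMeasure Ω) := by
  have h := integrableOn_kernel_mul hKmeas hK hΩ hφ hC
  exact ((h.mono_set (prod_mono le_rfl (subset_univ _))).smul_measure (by simp)).add_measure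
    (h.mono_set (prod_mono le_rfl (subset_univ _)))

lemma setIntegral_prod_self_kernel_sign_mul_snd_eq_neg (hKsymm : ∀ z, K (-z) = K z)
    (ν : EuclideanSpace ℝ (Fin n)) (w : EuclideanSpace ℝ (Fin n) → ℝ) :
    ∫ p in Ω ×ˢ Ω, K (p.1 - p.2) * Real.sign ⟪p.2 - p.1, ν⟫_ℝ * w p.2
      = -∫ p in Ω ×ˢ Ω, K (p.1 - p.2) * Real.sign ⟪p.2 - p.1, ν⟫_ℝ * w p.1 := by
  rw [Measure.volume_eq_prod, ← setIntegral_prod_swap, ← integral_neg]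
  congr 1 with p
  rw [Prod.fst_swap, Prod.snd_swap, ← neg_sub p.1, hKsymm, inner_neg_left, Real.sign_neg]
  ring

lemma setIntegral_prod_univ_kernel_sign_mul_fst_eq_zero (hKmeas : Measurable K) (hK : Integrable K)
    (hKsymm : ∀ z, K (-z) = K z) (hΩ : volume Ω ≠ ∞) (ν : EuclideanSpace ℝ (Fin n))
    {w : EuclideanSpace ℝ (Fin n) → ℝ} (hw : Measurable w) {C : ℝ}
    (hC : ∀ x, |w x| ≤ C) :
    ∫ p in Ω ×ˢ univ, K (p.1 - p.2) * Real.sign ⟪p.2 - p.1, ν⟫_ℝ * w p.1 = 0 := by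
  have hint := integrableOn_kernel_mul hKmeas hK hΩ
    (φ := fun p => Real.sign ⟪p.2 - p.1, ν⟫_ℝ * w p.1) (by fun_prop)
    fun p => Real.abs_sign_mul_le (hC p.1)
  simp_rw [← mul_assoc] at hint
  rw [Measure.volume_eq_prod, setIntegral_prod _ hint, Measure.restrict_univ]
  refine setIntegral_eq_zero_of_forall_eq_zero fun x _ => ?_
  dsimp only
  rw [integral_mul_const, integral_mul_sign_inner_sub_eq_zero hKsymm, zero_mul]

lemma integral_kernel_sign_mul_sub_eq_zero (hKmeas : Measurable K) (hK : Integrable K)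
    (hKsymm : ∀ z, K (-z) = K z) (hΩ : MeasurableSet Ω) (hΩfin : volume Ω ≠ ∞)
    (ν : EuclideanSpace ℝ (Fin n)) {w : EuclideanSpace ℝ (Fin n) → ℝ} (hw : Measurable w)
    {C : ℝ} (hC : ∀ x, |w x| ≤ C) (hw0 : ∀ᵐ x, x ∉ Ω → w x = 0) :
    ∫ p, K (p.1 - p.2) * (Real.sign ⟪p.2 - p.1, ν⟫_ℝ * (w p.2 - w p.1))
      ∂interactionMeasure Ω = 0 := by
  have hint (i : EuclideanSpace ℝ (Fin n) × EuclideanSpace ℝ (Fin n) → EuclideanSpace ℝ (Fin n))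
      (hi : Measurable i) (s : Set _) (hs : s ⊆ Ω ×ˢ univ) :
      IntegrableOn (fun p => K (p.1 - p.2) * Real.sign ⟪p.2 - p.1, ν⟫_ℝ * w (i p)) s := by
    simp_rw [mul_assoc]
    exact (integrableOn_kernel_mul hKmeas hK hΩfin (by fun_prop)
      fun p => Real.abs_sign_mul_le (hC (i p))).mono_set hs
  have hΩΩ : Ω ×ˢ Ω ⊆ Ω ×ˢ univ := prod_mono le_rfl (subset_univ _)
  have hΩΩc : Ω ×ˢ Ωᶜ ⊆ Ω ×ˢ univ := prod_mono le_rfl (subset_univ _)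
  have hnull :
      ∫ p in Ω ×ˢ Ωᶜ, K (p.1 - p.2) * Real.sign ⟪p.2 - p.1, ν⟫_ℝ * w p.2 = 0 := by
    rw [Measure.volume_eq_prod, setIntegral_prod _ (hint Prod.snd measurable_snd _ hΩΩc)]
    refine setIntegral_eq_zero_of_forall_eq_zero fun x _ => integral_eq_zero_of_ae ?_
    filter_upwards [(ae_restrict_iff' hΩ.compl).mpr hw0] with y hy
    simp [hy]
  have hsplit : ∫ p in Ω ×ˢ univ, K (p.1 - p.2) * Real.sign ⟪p.2 - p.1, ν⟫_ℝ * w p.1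
      = (∫ p in Ω ×ˢ Ω, K (p.1 - p.2) * Real.sign ⟪p.2 - p.1, ν⟫_ℝ * w p.1)
        + ∫ p in Ω ×ˢ Ωᶜ, K (p.1 - p.2) * Real.sign ⟪p.2 - p.1, ν⟫_ℝ * w p.1 := by
    rw [← union_compl_self Ω, prod_union]
    exact setIntegral_union (disjoint_prod.mpr (Or.inr disjoint_compl_right))
      (hΩ.prod hΩ.compl) (hint Prod.fst measurable_fst _ hΩΩ)
      (hint Prod.fst measurable_fst _ hΩΩc)
  rw [setIntegral_prod_univ_kernel_sign_mul_fst_eq_zero hKmeas hK hKsymm hΩfin ν hw hC] at hsplit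
  rw [integral_interactionMeasure (integrable_kernel_mul_interactionMeasure hKmeas hK hΩfin
    (by fun_prop) fun p =>
      Real.abs_sign_mul_le ((abs_sub _ _).trans (add_le_add (hC p.2) (hC p.1))))]
  simp_rw [mul_sub, ← mul_assoc]
  rw [integral_sub (hint Prod.snd measurable_snd _ hΩΩ) (hint Prod.fst measurable_fst _ hΩΩ),
    integral_sub (hint Prod.snd measurable_snd _ hΩΩc) (hint Prod.fst measurable_fst _ hΩΩc),
    setIntegral_prod_self_kernel_sign_mul_snd_eq_neg hKsymm, hnull]
  linarith

theorem nonlocalJ_indicator_halfspace_le_of_integrable (hKmeas : Measurable K)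
    (hK0 : ∀ z, 0 ≤ K z) (hKsymm : ∀ z, K (-z) = K z) (hK : Integrable K)
    (hΩ : MeasurableSet Ω) (hΩfin : volume Ω ≠ ∞) {ν : EuclideanSpace ℝ (Fin n)}
    {v : EuclideanSpace ℝ (Fin n) → ℝ} (hv : Measurable v)
    (hv01 : ∀ x, v x ∈ Icc (0 : ℝ) 1)
    (hvout : ∀ᵐ x, x ∉ Ω → v x = (halfspace ν).indicator 1 x) :
    nonlocalJ K Ω ((halfspace ν).indicator 1) ≤ nonlocalJ K Ω v := by
  set u := (halfspace ν).indicator (1 : EuclideanSpace ℝ (Fin n) → ℝ)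
  have hu : Measurable u := measurable_indicator_halfspace ν
  set σ : EuclideanSpace ℝ (Fin n) × EuclideanSpace ℝ (Fin n) → ℝ :=
    fun p => Real.sign ⟪p.2 - p.1, ν⟫_ℝ
  have hdiff {f : EuclideanSpace ℝ (Fin n) → ℝ} (hf : ∀ x, f x ∈ Icc (0 : ℝ) 1)
      (p : EuclideanSpace ℝ (Fin n) × EuclideanSpace ℝ (Fin n)) :
      |f p.2 - f p.1| ≤ 1 :=
    abs_sub_le_of_nonneg_of_le (hf p.2).1 (hf p.2).2 (hf p.1).1 (hf p.1).2
  have hσdiff {f : EuclideanSpace ℝ (Fin n) → ℝ} (hf : ∀ x, f x ∈ Icc (0 : ℝ) 1)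
      (p : EuclideanSpace ℝ (Fin n) × EuclideanSpace ℝ (Fin n)) :
      |σ p * (f p.2 - f p.1)| ≤ 1 :=
    Real.abs_sign_mul_le (hdiff hf p)
  have hint := @integrable_kernel_mul_interactionMeasure _ _ _ hKmeas hK hΩfin
  rw [nonlocalJ_eq_ofReal_integral hKmeas hK0 hu (hint (by fun_prop) fun p => by
      rw [abs_abs]; exact hdiff (indicator_halfspace_mem_Icc ν) p),
    nonlocalJ_eq_ofReal_integral hKmeas hK0 hv (hint (by fun_prop) fun p => by
      rw [abs_abs]; exact hdiff hv01 p)]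
  refine ENNReal.ofReal_le_ofReal ?_
  have hvar := integral_kernel_sign_mul_sub_eq_zero hKmeas hK hKsymm hΩ hΩfin ν (hv.sub hu)
    (fun x => abs_sub_le_of_nonneg_of_le (hv01 x).1 (hv01 x).2
      (indicator_halfspace_mem_Icc ν x).1 (indicator_halfspace_mem_Icc ν x).2)
    (hvout.mono fun x hx hxΩ => sub_eq_zero.mpr (hx hxΩ))
  calc ∫ p, K (p.1 - p.2) * |u p.2 - u p.1| ∂interactionMeasure Ω
      = ∫ p, K (p.1 - p.2) * (σ p * (u p.2 - u p.1)) ∂interactionMeasure Ω :=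
        integral_congr_ae (ae_of_all _ fun p =>
          congrArg _ (abs_indicator_halfspace_sub ν p.1 p.2))
    _ = ∫ p, K (p.1 - p.2) * (σ p * (v p.2 - v p.1)) ∂interactionMeasure Ω := by
        rw [eq_comm, ← sub_eq_zero, ← integral_sub (hint (by fun_prop) (hσdiff hv01))
          (hint (by fun_prop) (hσdiff (f := u) (indicator_halfspace_mem_Icc ν))), ← hvar]
        congr 1 with p
        simp only [Pi.sub_apply]
        ring
    _ ≤ ∫ p, K (p.1 - p.2) * |v p.2 - v p.1| ∂interactionMeasure Ω := by
        refine integral_mono (hint (by fun_prop) (hσdiff hv01))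
          (hint (by fun_prop) fun p => by rw [abs_abs]; exact hdiff hv01 p)
          fun p => mul_le_mul_of_nonneg_left ((le_abs_self _).trans (Real.abs_sign_mul_le le_rfl))
            (hK0 _)

end Interaction

lemma nonlocalJ_eq_iSup {n : ℕ} {K : EuclideanSpace ℝ (Fin n) → ℝ} (hK : Measurable K)
    {Kj : ℕ → EuclideanSpace ℝ (Fin n) → ℝ} (hKj : ∀ j, Measurable (Kj j))
    (hmono : ∀ z, Monotone fun j => Kj j z)
    (hsup : ∀ z ≠ 0, ⨆ j, ENNReal.ofReal (Kj j z) = ENNReal.ofReal (K z))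
    (Ω : Set (EuclideanSpace ℝ (Fin n))) {u : EuclideanSpace ℝ (Fin n) → ℝ}
    (hu : Measurable u) :
    nonlocalJ K Ω u = ⨆ j, nonlocalJ (Kj j) Ω u := by
  simp_rw [nonlocalJ_eq_lintegral hK hu, nonlocalJ_eq_lintegral (hKj _) hu]
  rw [← lintegral_iSup (fun j => by fun_prop)
    fun i j hij p => by gcongr; exact hmono _ hij]
  refine lintegral_congr fun p => ?_
  rcases eq_or_ne (p.1 - p.2) 0 with h | h
  · simp [sub_eq_zero.mp h]
  · rw [← ENNReal.iSup_mul, hsup _ h]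

section Cutoff

variable {E : Type*} [NormedAddCommGroup E] {K : E → ℝ}

noncomputable def cutoffKernel (K : E → ℝ) (j : ℕ) : E → ℝ :=
  (closedBall (0 : E) (j + 1 : ℝ)⁻¹)ᶜ.indicator K

lemma cutoffKernel_nonneg (hK0 : ∀ z, 0 ≤ K z) (j : ℕ) (z : E) : 0 ≤ cutoffKernel K j z :=
  indicator_nonneg (fun z _ => hK0 z) z

lemma cutoffKernel_neg (hKsymm : ∀ z, K (-z) = K z) (j : ℕ) (z : E) :
    cutoffKernel K j (-z) = cutoffKernel K j z := by
  have hmem :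
      -z ∈ (closedBall (0 : E) (j + 1 : ℝ)⁻¹)ᶜ ↔ z ∈ (closedBall (0 : E) (j + 1 : ℝ)⁻¹)ᶜ := by
    simp only [mem_compl_iff, mem_closedBall_zero_iff, norm_neg]
  by_cases hz : z ∈ (closedBall (0 : E) (j + 1 : ℝ)⁻¹)ᶜ
  · rw [cutoffKernel, indicator_of_mem hz, indicator_of_mem (hmem.mpr hz), hKsymm]
  · rw [cutoffKernel, indicator_of_notMem hz, indicator_of_notMem (mt hmem.mp hz)]

lemma measurable_cutoffKernel [MeasurableSpace E] [OpensMeasurableSpace E] (hK : Measurable K)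
    (j : ℕ) : Measurable (cutoffKernel K j) :=
  hK.indicator measurableSet_closedBall.compl

lemma cutoffKernel_mono (hK0 : ∀ z, 0 ≤ K z) (z : E) :
    Monotone fun j => cutoffKernel K j z := by
  intro i j hij
  refine indicator_le_indicator_of_subset (compl_subset_compl.mpr (closedBall_subset_closedBall ?_))
    (fun z => hK0 z) z
  gcongr

lemma iSup_ofReal_cutoffKernel (hK0 : ∀ z, 0 ≤ K z) {z : E} (hz : z ≠ 0) :
    ⨆ j, ENNReal.ofReal (cutoffKernel K j z) = ENNReal.ofReal (K z) := by
  obtain ⟨j, hj⟩ := exists_nat_one_div_lt (norm_pos_iff.mpr hz)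
  refine le_antisymm (iSup_le fun i => ENNReal.ofReal_le_ofReal ?_) (le_iSup_of_le j ?_)
  · exact indicator_le_self' (fun z _ => hK0 z) z
  · rw [cutoffKernel, indicator_of_mem (by simpa [one_div] using hj)]

lemma integrable_cutoffKernel [MeasurableSpace E] [OpensMeasurableSpace E] {μ : Measure E}
    (hKmeas : Measurable K) (hK0 : ∀ z, 0 ≤ K z)
    (hKint : ∫⁻ z, ENNReal.ofReal (min 1 ‖z‖ * K z) ∂μ < ⊤) (j : ℕ) :
    Integrable (cutoffKernel K j) μ := by
  have hint : Integrable (fun z => min 1 ‖z‖ * K z) μ := by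
    refine ⟨by fun_prop, (hasFiniteIntegral_iff_ofReal (ae_of_all _ fun z => ?_)).mpr hKint⟩
    exact mul_nonneg (le_min zero_le_one (norm_nonneg z)) (hK0 z)
  refine (hint.const_mul (j + 1)).mono' (measurable_cutoffKernel hKmeas j).aestronglyMeasurable
    (ae_of_all _ fun z => ?_)
  have hj : (0 : ℝ) < j + 1 := by positivity
  rw [Real.norm_eq_abs, abs_of_nonneg (cutoffKernel_nonneg hK0 j z), cutoffKernel]
  by_cases hz : z ∈ (closedBall (0 : E) (j + 1 : ℝ)⁻¹)ᶜ
  · have hr : (j + 1 : ℝ)⁻¹ ≤ min 1 ‖z‖ :=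
      le_min (inv_le_one_of_one_le₀ (by simp)) (not_le.mp (mt mem_closedBall_zero_iff.mpr hz)).le
    rw [indicator_of_mem hz]
    calc K z = (j + 1) * ((j + 1 : ℝ)⁻¹ * K z) := by field_simp
      _ ≤ (j + 1) * (min 1 ‖z‖ * K z) := by gcongr; exact hK0 z
  · rw [indicator_of_notMem hz]
    exact mul_nonneg hj.le (mul_nonneg (le_min zero_le_one (norm_nonneg z)) (hK0 z))

end Cutoff

theorem halfspace_local_minimizer_general (n : ℕ)
    (K : EuclideanSpace ℝ (Fin n) → ℝ) (hKmeas : Measurable K)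
    (hK0 : ∀ x, 0 ≤ K x) (hKsymm : ∀ x, K (-x) = K x)
    (hKint : ∫⁻ x : EuclideanSpace ℝ (Fin n),
        ENNReal.ofReal (min 1 ‖x‖ * K x) < ⊤)
    (ν : EuclideanSpace ℝ (Fin n)) (hν : ν ≠ 0) :
    nonlocalJ K (ball (0 : EuclideanSpace ℝ (Fin n)) 1)
        ((halfspace ν).indicator 1) < ⊤
    ∧ ∀ v : EuclideanSpace ℝ (Fin n) → ℝ, Measurable v →
        (∀ x, v x ∈ Icc (0 : ℝ) 1) →
        (∀ᵐ x : EuclideanSpace ℝ (Fin n),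
          x ∉ ball (0 : EuclideanSpace ℝ (Fin n)) 1 →
            v x = (halfspace ν).indicator (fun _ => (1:ℝ)) x) →
        nonlocalJ K (ball (0 : EuclideanSpace ℝ (Fin n)) 1)
            ((halfspace ν).indicator 1)
          ≤ nonlocalJ K (ball (0 : EuclideanSpace ℝ (Fin n)) 1) v := by
  refine ⟨nonlocalJ_indicator_halfspace_ball_lt_top hKmeas hKsymm hKint hν,
    fun v hv hv01 hvout => ?_⟩
  have hcut (u : EuclideanSpace ℝ (Fin n) → ℝ) (hu : Measurable u) :=
    nonlocalJ_eq_iSup hKmeas (measurable_cutoffKernel hKmeas) (cutoffKernel_mono hK0)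
      (fun _ => iSup_ofReal_cutoffKernel hK0) (ball 0 1) hu
  rw [hcut _ (measurable_indicator_halfspace ν), hcut v hv]
  exact iSup_mono fun j => nonlocalJ_indicator_halfspace_le_of_integrable
    (measurable_cutoffKernel hKmeas j) (cutoffKernel_nonneg hK0 j) (cutoffKernel_neg hKsymm j)
    (integrable_cutoffKernel hKmeas hK0 hKint j) measurableSet_ball measure_ball_lt_top.ne
    hv hv01 hvout

/-- The halfspace has finite nonlocal perimeter in the unit ball and is a local
minimizer subject to its own outer datum. -/
theorem halfspace_local_minimizer (n : ℕ) (hn : 1 ≤ n)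
    (K : EuclideanSpace ℝ (Fin n) → ℝ) (hKmeas : Measurable K)
    (hK0 : ∀ x, 0 ≤ K x) (hKsymm : ∀ x, K (-x) = K x)
    (hKint : ∫⁻ x : EuclideanSpace ℝ (Fin n),
        ENNReal.ofReal (min 1 ‖x‖ * K x) < ⊤)
    (ν : EuclideanSpace ℝ (Fin n)) (hν : ν ≠ 0) :
    nonlocalJ K (ball (0 : EuclideanSpace ℝ (Fin n)) 1)
        ((halfspace ν).indicator 1) < ⊤
    ∧ ∀ v : EuclideanSpace ℝ (Fin n) → ℝ, Measurable v →
        (∀ x, v x ∈ Icc (0 : ℝ) 1) →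
        (∀ᵐ x : EuclideanSpace ℝ (Fin n),
          x ∉ ball (0 : EuclideanSpace ℝ (Fin n)) 1 →
            v x = (halfspace ν).indicator (fun _ => (1:ℝ)) x) →
        nonlocalJ K (ball (0 : EuclideanSpace ℝ (Fin n)) 1)
            ((halfspace ν).indicator 1)
          ≤ nonlocalJ K (ball (0 : EuclideanSpace ℝ (Fin n)) 1) v :=
  halfspace_local_minimizer_general n K hKmeas hK0 hKsymm hKint ν hν
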